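/- For tuples A ∈ ℕ^a and B ∈ ℕ^b with |A| = |B|, the quantum multinomial [|A| choose B₁,…,B_b] can be expanded as a sum over matrices AB ∈ ℕ^{a×b} with column sums equal to B (i.e. Σ_α AB_{α,β} = B_β for each β) and row sums equal to A (only such terms contribute nonzero), of monomials q^{e(AB)} times the product over α = 1,…,a of [A_α choose AB_{α,1},…,AB_{α,b}], where e(AB) is an explicit quadratic form in the entries of AB; in particular, such an expansion with integer-coefficient monomial prefactors exists. -/

import Mathlib

open Finset

noncomputable def q : RatFunc ℚ := RatFunc.X

/-- `(q²;q²)_k = ∏_{i=1}^{k} (1 - q^{2i})`. -/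
noncomputable def qp (k : ℕ) : RatFunc ℚ := ∏ i ∈ Finset.range k, (1 - q ^ (2 * (i + 1)))

/-- The quantum multinomial coefficient `[|d| choose d₁,…,d_m]`. -/
noncomputable def qmul {m : ℕ} (d : Fin m → ℕ) : RatFunc ℚ :=
  qp (∑ i, d i) / ∏ i, qp (d i)

/-! Removing the first row `A 0` of a table with column sums `B` leaves a table with column sums
`B - r`, where `r` is that row; so the statement follows by induction on the number of rows from
its two-row case `[|B| choose B] = Σ_{r ≤ B, |r| = k} q^{E(r)} [k choose r] [|B| - k choose B - r]`.
That case follows column by column from the q-Vandermonde identity for Gaussian binomials in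
base `q²`, itself a consequence of the q-Pascal recurrence. Only the existence of the exponents is
kept track of, and expansions of that shape are stable under substituting expansions of the
coefficients and reindexing. -/

lemma q_ne_zero : q ≠ 0 := RatFunc.X_ne_zero

lemma one_sub_q_pow_ne_zero {m : ℕ} (hm : m ≠ 0) : (1 : RatFunc ℚ) - q ^ m ≠ 0 := by
  have : (1 : RatFunc ℚ) - q ^ m =
      algebraMap (Polynomial ℚ) (RatFunc ℚ) (1 - Polynomial.X ^ m) := by
    simp [q, RatFunc.algebraMap_X]
  rw [this]
  refine RatFunc.algebraMap_ne_zero fun h => ?_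
  simpa [hm] using congrArg (Polynomial.eval 0) h

lemma qp_ne_zero (k : ℕ) : qp k ≠ 0 :=
  prod_ne_zero_iff.2 fun _ _ => one_sub_q_pow_ne_zero (by positivity)

@[simp] lemma qp_zero : qp 0 = 1 := prod_range_zero _

lemma qp_succ (k : ℕ) : qp (k + 1) = qp k * (1 - q ^ (2 * (k + 1))) :=
  prod_range_succ _ k

/-- The Gaussian binomial `[n choose k]` in base `q²`, extended by `0` for `k > n` so that the
q-Pascal and q-Vandermonde identities need no side conditions. -/
noncomputable def qbin (n k : ℕ) : RatFunc ℚ :=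
  if k ≤ n then qp n / (qp k * qp (n - k)) else 0

lemma qbin_of_le {n k : ℕ} (h : k ≤ n) : qbin n k = qp n / (qp k * qp (n - k)) := if_pos h

lemma qbin_of_lt {n k : ℕ} (h : n < k) : qbin n k = 0 := if_neg (Nat.not_le.2 h)

lemma qbin_zero_left {k : ℕ} (hk : k ≠ 0) : qbin 0 k = 0 := qbin_of_lt (Nat.pos_of_ne_zero hk)

@[simp] lemma qbin_zero_right (n : ℕ) : qbin n 0 = 1 := by
  simp [qbin_of_le, qp_ne_zero]

@[simp] lemma qbin_self (n : ℕ) : qbin n n = 1 := by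
  simp [qbin_of_le, qp_ne_zero]

lemma qbin_succ_succ (n k : ℕ) :
    qbin (n + 1) (k + 1) = qbin n (k + 1) + q ^ (2 * (n - k)) * qbin n k := by
  rcases lt_trichotomy k n with hk | rfl | hk
  · obtain ⟨d, rfl⟩ := Nat.exists_eq_add_of_lt hk
    rw [qbin_of_le (by omega), qbin_of_le (by omega), qbin_of_le (by omega),
      show k + d + 1 + 1 - (k + 1) = d + 1 by omega, show k + d + 1 - (k + 1) = d by omega,
      show k + d + 1 - k = d + 1 by omega, qp_succ (k + d + 1), qp_succ k, qp_succ d]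
    have := qp_ne_zero k
    have := qp_ne_zero d
    have := one_sub_q_pow_ne_zero (m := 2 * (k + 1)) (by omega)
    have := one_sub_q_pow_ne_zero (m := 2 * (d + 1)) (by omega)
    field_simp
    ring
  · simp [qbin_of_lt (Nat.lt_succ_self k)]
  · simp [qbin_of_lt hk, qbin_of_lt (Nat.lt_succ_of_lt hk), qbin_of_lt (by omega : n + 1 < k + 1)]

theorem qbin_add (m n k : ℕ) :
    qbin (m + n) k =
      ∑ p ∈ antidiagonal k, q ^ (2 * ((m - p.1) * p.2)) * qbin m p.1 * qbin n p.2 := by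
  induction n generalizing k with
  | zero =>
    rw [sum_eq_single (k, 0) (fun p hp hne => ?_) (by simp)]
    · simp
    · have hp2 : p.2 ≠ 0 := fun h =>
        hne (Prod.ext (by simpa [h] using HasAntidiagonal.mem_antidiagonal.1 hp) h)
      rw [qbin_zero_left hp2, mul_zero]
  | succ n ih =>
    cases k with
    | zero => simp
    | succ k =>
      rw [← add_assoc, qbin_succ_succ, ih, ih, Nat.sum_antidiagonal_succ',
        Nat.sum_antidiagonal_succ', mul_sum]
      simp only [qbin_succ_succ, qbin_zero_right, mul_add, sum_add_distrib, add_assoc]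
      congr 2
      refine sum_congr rfl fun p hp => ?_
      obtain ⟨i, j⟩ := p
      rw [HasAntidiagonal.mem_antidiagonal] at hp
      by_cases hi : i ≤ m
      · by_cases hj : j ≤ n
        · obtain ⟨m, rfl⟩ := Nat.exists_eq_add_of_le hi
          obtain ⟨n, rfl⟩ := Nat.exists_eq_add_of_le hj
          subst hp
          simp only [show i + m + (j + n) - (i + j) = m + n by omega, Nat.add_sub_cancel_left]
          ring
        · simp [qbin_of_lt (Nat.lt_of_not_le hj)]
      · simp [qbin_of_lt (Nat.lt_of_not_le hi)]

@[simp] lemma qmul_zero (m : ℕ) : qmul (0 : Fin m → ℕ) = 1 := by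
  simp [qmul]

lemma qmul_cons {m : ℕ} (c : ℕ) (d : Fin m → ℕ) :
    qmul (Fin.cons c d) = qbin (c + ∑ i, d i) c * qmul d := by
  have := qp_ne_zero c
  have := qp_ne_zero (∑ i, d i)
  have : ∏ i, qp (d i) ≠ 0 := prod_ne_zero_iff.2 fun i _ => qp_ne_zero _
  simp only [qmul, Fin.sum_cons, Fin.prod_univ_succ, Fin.cons_zero, Fin.cons_succ,
    qbin_of_le (Nat.le_add_right c _), Nat.add_sub_cancel_left]
  field_simp

def IsQMonomialSum {ι : Type*} (x : RatFunc ℚ) (s : Finset ι) (f : ι → RatFunc ℚ) : Prop :=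
  ∃ e : ι → ℤ, x = ∑ i ∈ s, q ^ e i * f i

namespace IsQMonomialSum

variable {ι κ μ : Type*} {x : RatFunc ℚ} {s : Finset ι} {f g : ι → RatFunc ℚ}

lemma of_eq_sum_pow (e : ι → ℕ) (h : x = ∑ i ∈ s, q ^ e i * f i) : IsQMonomialSum x s f :=
  ⟨fun i => e i, by simpa only [zpow_natCast] using h⟩

lemma congr (hx : IsQMonomialSum x s f) (h : ∀ i ∈ s, f i = g i) : IsQMonomialSum x s g := by
  obtain ⟨e, rfl⟩ := hx
  exact ⟨e, sum_congr rfl fun i hi => by rw [h i hi]⟩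

lemma const_mul (c : RatFunc ℚ) (hx : IsQMonomialSum x s f) :
    IsQMonomialSum (c * x) s fun i => c * f i := by
  obtain ⟨e, rfl⟩ := hx
  exact ⟨e, by rw [mul_sum]; exact sum_congr rfl fun i _ => mul_left_comm _ _ _⟩

lemma mul_const (c : RatFunc ℚ) (hx : IsQMonomialSum x s f) :
    IsQMonomialSum (x * c) s fun i => f i * c := by
  simpa only [mul_comm _ c] using hx.const_mul c

lemma filter (p : ι → Prop) [DecidablePred p] (hx : IsQMonomialSum x s f)
    (h : ∀ i ∈ s, ¬p i → f i = 0) : IsQMonomialSum x (s.filter p) f := by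
  obtain ⟨e, rfl⟩ := hx
  refine ⟨e, (sum_filter_of_ne fun i hi hne => ?_).symm⟩
  by_contra hp
  exact hne (by rw [h i hi hp, mul_zero])

lemma bind {t : ι → Finset κ} {u : Finset μ} {g : μ → RatFunc ℚ} (e : ι × κ ≃ μ)
    (hx : IsQMonomialSum x s f) (hf : ∀ i ∈ s, IsQMonomialSum (f i) (t i) fun j => g (e (i, j)))
    (hu : ∀ p : ι × κ, e p ∈ u ↔ p.1 ∈ s ∧ p.2 ∈ t p.1) : IsQMonomialSum x u g := by
  obtain ⟨a, rfl⟩ := hx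
  have : ∀ i, ∃ b : κ → ℤ, i ∈ s → f i = ∑ j ∈ t i, q ^ b j * g (e (i, j)) := fun i => by
    by_cases hi : i ∈ s
    · obtain ⟨b, hb⟩ := hf i hi
      exact ⟨b, fun _ => hb⟩
    · exact ⟨0, fun h => absurd h hi⟩
  choose b hb using this
  refine ⟨fun m => a (e.symm m).1 + b (e.symm m).1 (e.symm m).2, ?_⟩
  calc ∑ i ∈ s, q ^ a i * f i
      = ∑ p ∈ s.sigma t, q ^ (a p.1 + b p.1 p.2) * g (e (p.1, p.2)) := by
        rw [sum_sigma]
        refine sum_congr rfl fun i hi => ?_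
        rw [hb i hi, mul_sum]
        exact sum_congr rfl fun j _ => by rw [zpow_add₀ q_ne_zero, mul_assoc]
    _ = _ := sum_equiv ((Equiv.sigmaEquivProd ι κ).trans e) (by simp [hu]) (by simp)

end IsQMonomialSum

lemma sum_sub_of_le {ι : Type*} [Fintype ι] {r B : ι → ℕ} (h : r ≤ B) :
    ∑ j, (B - r) j = ∑ j, B j - ∑ j, r j :=
  sum_tsub_distrib _ fun j _ => h j

def tupleSplits {b : ℕ} (B : Fin b → ℕ) (k : ℕ) : Finset (Fin b → ℕ) :=
  (Nat.antidiagonalTuple b k).filter fun r => ∀ j, r j ≤ B j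

@[simp] lemma mem_tupleSplits {b k : ℕ} {B r : Fin b → ℕ} :
    r ∈ tupleSplits B k ↔ ∑ j, r j = k ∧ r ≤ B := by
  simp [tupleSplits, Finset.Nat.mem_antidiagonalTuple, Pi.le_def]

lemma cons_mem_tupleSplits {b k l : ℕ} {B : Fin (b + 1) → ℕ} (hkl : k + l = ∑ j, B j)
    (i : ℕ) (r : Fin b → ℕ) :
    Fin.cons i r ∈ tupleSplits B k ↔
      i ∈ (range (B 0 + 1)).filter (fun i => i ≤ k ∧ B 0 - i ≤ l) ∧
        r ∈ tupleSplits (Fin.tail B) (k - i) := by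
  have hle : r ≤ Fin.tail B → ∑ j, r j ≤ ∑ j, Fin.tail B j := fun h => sum_le_sum fun j _ => h j
  rw [show ∑ j, B j = B 0 + ∑ j, Fin.tail B j from Fin.sum_univ_succ B] at hkl
  simp only [mem_tupleSplits, Fin.sum_cons, Fin.cons_le, mem_filter, mem_range]
  constructor
  · rintro ⟨hsum, hi, hr⟩
    have := hle hr
    exact ⟨⟨by omega, by omega, by omega⟩, by omega, hr⟩
  · rintro ⟨⟨hi, hik, -⟩, hsum, hr⟩
    exact ⟨by omega, by omega, hr⟩

theorem qmul_isQMonomialSum_tupleSplits {b : ℕ} (B : Fin b → ℕ) {k l : ℕ}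
    (hkl : k + l = ∑ j, B j) :
    IsQMonomialSum (qmul B) (tupleSplits B k) fun r => qmul r * qmul (B - r) := by
  induction b generalizing k l with
  | zero =>
    obtain rfl : k = 0 := by simp at hkl; omega
    obtain rfl : B = 0 := Subsingleton.elim _ _
    have : tupleSplits (0 : Fin 0 → ℕ) 0 = {0} := by
      ext r
      simp [Subsingleton.elim r 0]
    rw [this]
    exact ⟨0, by simp [qmul]⟩
  | succ b ih =>
    have hsum : ∑ j, B j = B 0 + ∑ j, Fin.tail B j := Fin.sum_univ_succ B
    have hvdm : IsQMonomialSum (qmul B) (range (B 0 + 1))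
        fun i => qbin k i * qbin l (B 0 - i) * qmul (Fin.tail B) := by
      rw [← Fin.cons_self_tail B, qmul_cons, ← hsum, ← hkl]
      refine (IsQMonomialSum.of_eq_sum_pow (fun i => 2 * ((k - i) * (B 0 - i))) ?_).mul_const _
      rw [qbin_add, Nat.sum_antidiagonal_eq_sum_range_succ_mk]
      simp only [Fin.cons_zero, mul_assoc]
    refine (hvdm.filter (fun i => i ≤ k ∧ B 0 - i ≤ l) fun i _ hi => ?_).bind
      (t := fun i => tupleSplits (Fin.tail B) (k - i)) (Fin.consEquiv fun _ => ℕ)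
      (fun i hi => ?_) fun p => cons_mem_tupleSplits hkl p.1 p.2
    · rcases not_and_or.1 hi with hi | hi
      · rw [qbin_of_lt (Nat.lt_of_not_le hi), zero_mul, zero_mul]
      · rw [qbin_of_lt (Nat.lt_of_not_le hi), mul_zero, zero_mul]
    · simp only [mem_filter, mem_range] at hi
      refine ((ih (Fin.tail B) (k := k - i) (l := l - (B 0 - i)) (by omega)).const_mul
        (qbin k i * qbin l (B 0 - i))).congr fun r hr => ?_
      rw [mem_tupleSplits] at hr
      have hsub : B - Fin.cons i r = Fin.cons (B 0 - i) (Fin.tail B - r) := by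
        ext j
        refine Fin.cases ?_ (fun j => ?_) j <;> simp [Fin.tail]
      rw [show (Fin.consEquiv fun _ => ℕ) (i, r) = Fin.cons i r from rfl, hsub, qmul_cons,
        qmul_cons, sum_sub_of_le hr.2, hr.1, show i + (k - i) = k by omega,
        show B 0 - i + (∑ j, Fin.tail B j - (k - i)) = l by omega]
      ring

def contingencyTables {a b : ℕ} (A : Fin a → ℕ) (B : Fin b → ℕ) : Finset (Fin a → Fin b → ℕ) :=
  (Fintype.piFinset fun _ : Fin a =>
      Fintype.piFinset fun _ : Fin b => Finset.range ((∑ i, A i) + 1)).filter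
    (fun M => (∀ i, ∑ j, M i j = A i) ∧ ∀ j, ∑ i, M i j = B j)

lemma mem_contingencyTables {a b : ℕ} {A : Fin a → ℕ} {B : Fin b → ℕ} {M : Fin a → Fin b → ℕ} :
    M ∈ contingencyTables A B ↔ (∀ i, ∑ j, M i j = A i) ∧ ∀ j, ∑ i, M i j = B j := by
  simp only [contingencyTables, mem_filter, Fintype.mem_piFinset, mem_range, and_iff_right_iff_imp]
  rintro ⟨hrow, -⟩ i j
  calc M i j ≤ ∑ j, M i j := single_le_sum (fun _ _ => Nat.zero_le _) (mem_univ j)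
    _ = A i := hrow i
    _ < ∑ i, A i + 1 := Nat.lt_succ_of_le (single_le_sum (fun _ _ => Nat.zero_le _) (mem_univ i))

lemma cons_mem_contingencyTables {a b : ℕ} {A : Fin (a + 1) → ℕ} {B : Fin b → ℕ}
    (r : Fin b → ℕ) (M : Fin a → Fin b → ℕ) :
    Fin.cons r M ∈ contingencyTables A B ↔
      r ∈ tupleSplits B (A 0) ∧ M ∈ contingencyTables (Fin.tail A) (B - r) := by
  simp only [mem_contingencyTables, mem_tupleSplits, Fin.forall_fin_succ, Fin.cons_zero,
    Fin.cons_succ, Fin.sum_univ_succ, Pi.le_def, Pi.sub_apply, Fin.tail]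
  constructor
  · rintro ⟨⟨h0, hrow⟩, hcol⟩
    exact ⟨⟨h0, fun j => by have := hcol j; omega⟩, hrow, fun j => by have := hcol j; omega⟩
  · rintro ⟨⟨h0, hle⟩, hrow, hcol⟩
    exact ⟨⟨h0, hrow⟩, fun j => by have := hle j; have := hcol j; omega⟩

theorem qmul_isQMonomialSum_contingencyTables {a b : ℕ} (A : Fin a → ℕ) (B : Fin b → ℕ)
    (h : ∑ i, A i = ∑ j, B j) :
    IsQMonomialSum (qmul B) (contingencyTables A B) fun M => ∏ i, qmul (M i) := by
  induction a generalizing B with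
  | zero =>
    have hB : B = 0 := funext fun j => sum_eq_zero_iff.1 (by simpa using h.symm) j (mem_univ j)
    have : contingencyTables A B = {0} := by
      ext M
      simp [mem_contingencyTables, hB, Subsingleton.elim M 0]
    rw [this, hB]
    exact ⟨0, by simp⟩
  | succ a ih =>
    have hsum : ∑ i, A i = A 0 + ∑ i, Fin.tail A i := Fin.sum_univ_succ A
    refine (qmul_isQMonomialSum_tupleSplits B (hsum ▸ h)).bind
      (t := fun r => contingencyTables (Fin.tail A) (B - r)) (Fin.consEquiv fun _ => Fin b → ℕ)
      (fun r hr => ?_) fun p => cons_mem_contingencyTables p.1 p.2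
    rw [mem_tupleSplits] at hr
    refine ((ih (Fin.tail A) (B - r) ?_).const_mul (qmul r)).congr fun M _ => ?_
    · rw [sum_sub_of_le hr.2]
      omega
    · rw [show (Fin.consEquiv fun _ => Fin b → ℕ) (r, M) = Fin.cons r M from rfl,
        Fin.prod_univ_succ]
      simp

/-- KRSS Lemma 4.6: for tuples `A ∈ ℕ^a`, `B ∈ ℕ^b` with `|A| = |B|`, the quantum multinomial
`[|A| choose B]` expands as a sum over matrices `AB ∈ ℕ^{a×b}` with row sums `A` and column
sums `B` of monomials `q^{e(AB)}` (with integer exponents) times `∏_α [A_α choose AB_{α,*}]`. -/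
theorem quantum_multinomial_refinement {a b : ℕ} (A : Fin a → ℕ) (B : Fin b → ℕ)
    (h : ∑ i, A i = ∑ j, B j) :
    ∃ e : (Fin a → Fin b → ℕ) → ℤ,
      qmul B =
        ∑ M ∈ (Fintype.piFinset fun _ : Fin a =>
            Fintype.piFinset fun _ : Fin b => Finset.range ((∑ i, A i) + 1)).filter
            (fun M => (∀ i, ∑ j, M i j = A i) ∧ ∀ j, ∑ i, M i j = B j),
          q ^ (e M) * ∏ i, qmul (M i) :=
  qmul_isQMonomialSum_contingencyTables A B h
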